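/- In the trace-extended big-step semantics, c ⇒ (σ, r) is coinductively derivable for some finite trace σ if and only if c ⇒ r is inductively derivable in the original big-step rules (the trace construction is conservative over convergence). -/

import Mathlib

/-- Judgements over configurations `C` and extended results `Option R`
    (`none` stands for the special extra result such as `?`, `wrong`, or `∞`). -/
abbrev Judg (C R : Type) := C × Option R

/-- Lift a complete judgement to an extended judgement. -/
def liftJ {C R : Type} (j : C × R) : Judg C R := (j.1, some j.2)

/-- Bounded-premises condition. -/
def BP {C R : Type} (Rules : Set (List (C × R) × (C × R))) : Prop :=
  ∀ c : C, ∃ b : ℕ, ∀ js res, (js, (c, res)) ∈ Rules → js.length ≤ b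

/-- The extended rule set `Rules_?`: original rules (lifted), start axioms
    `c ⇒ ?`, and partial rules. -/
def RulesQ {C R : Type} (Rules : Set (List (C × R) × (C × R))) :
    Set (List (Judg C R) × Judg C R) :=
  { r | (∃ c : C, r = ([], (c, none)))
      ∨ (∃ (js : List (C × R)) (c : C) (res : R), (js, (c, res)) ∈ Rules ∧ r = (js.map liftJ, (c, some res)))
      ∨ (∃ (js : List (C × R)) (c : C) (res : R) (i : ℕ) (hi : i < js.length) (u : Option R),
          (js, (c, res)) ∈ Rules ∧
          r = ((js.take i).map liftJ ++ [((js[i]'hi).1, u)], (c, none))) }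

/-- Ordered trees labelled in `L`: partial functions from positions (lists of
    child indices) to labels, with nonempty, prefix-closed,
    sibling-downward-closed domain. -/
structure OTree (L : Type) where
  label : List ℕ → Option L
  root_isSome : (label []).isSome
  pref : ∀ α n, (label (α ++ [n])).isSome → (label α).isSome
  sib : ∀ α n k, (label (α ++ [n])).isSome → k ≤ n → (label (α ++ [k])).isSome

/-- A tree is an evaluation tree in a rule set: at every node, the ordered
    children labels together with the node label form a rule. -/
def IsTreeIn {L : Type} (Rules : Set (List L × L)) (t : OTree L) : Prop :=
  ∀ α l, t.label α = some l →
    ∃ ps : List L, (∀ i : ℕ, t.label (α ++ [i]) = ps[i]?) ∧ (ps, l) ∈ Rules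

/-- Partial evaluation trees: evaluation trees in `Rules_?`. -/
def IsPET {C R : Type} (Rules : Set (List (C × R) × (C × R)))
    (t : OTree (Judg C R)) : Prop :=
  IsTreeIn (RulesQ Rules) t

/-- The refinement relation `⊑` on trees labelled by possibly-incomplete
    judgements. -/
def TreeLE {C R : Type} (t t' : OTree (Judg C R)) : Prop :=
  (∀ α, (t.label α).isSome → (t'.label α).isSome) ∧
  ∀ α c u, t.label α = some (c, u) →
    (∃ (u' : Option R), t'.label α = some (c, u')) ∧
    (u.isSome → ∀ β, t.label (α ++ β) = t'.label (α ++ β))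

/-- Strict refinement `⊏`. -/
def TreeLT {C R : Type} (t t' : OTree (Judg C R)) : Prop :=
  TreeLE t t' ∧ t ≠ t'

/-- A tree is finite if its domain is finite. -/
def TreeFinite {L : Type} (t : OTree L) : Prop :=
  Set.Finite {α | (t.label α).isSome}

/-- Well-formedness: every subtree rooted at a complete node is finite. -/
def WellFormed {C R : Type} (t : OTree (Judg C R)) : Prop :=
  ∀ α c r, t.label α = some (c, some r) →
    Set.Finite {β | (t.label (α ++ β)).isSome}

/-- `t` is a least upper bound of the sequence `f` w.r.t. `⊑`. -/
def IsLubSeq {C R : Type} (f : ℕ → OTree (Judg C R)) (t : OTree (Judg C R)) : Prop :=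
  (∀ n, TreeLE (f n) t) ∧ ∀ t', (∀ n, TreeLE (f n) t') → TreeLE t t'

/-- Inductive derivability in a rule set with finite-list premises. -/
inductive IndDerives {J : Type} (Rules : Set (List J × J)) : J → Prop where
  | node (ps : List J) (j : J) : (ps, j) ∈ Rules →
      (∀ p ∈ ps, IndDerives Rules p) → IndDerives Rules j

/-- A set of judgements is consistent w.r.t. a rule set. -/
def ConsistentL {J : Type} (Rules : Set (List J × J)) (X : Set J) : Prop :=
  ∀ j ∈ X, ∃ (ps : List J), (ps, j) ∈ Rules ∧ ∀ p ∈ ps, p ∈ X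

/-- Coinductive derivability: membership in some consistent set. -/
def CoDerives {J : Type} (Rules : Set (List J × J)) (j : J) : Prop :=
  ∃ (X : Set J), ConsistentL Rules X ∧ j ∈ X

/-- Derivability in a generalised inference system (rules + corules):
    membership in a consistent set all of whose elements have a finite
    derivation using both rules and corules. -/
def GenDerives {J : Type} (rules corules : Set (List J × J)) (j : J) : Prop :=
  ∃ (X : Set J), ConsistentL rules X ∧ (∀ x ∈ X, IndDerives (rules ∪ corules) x) ∧ j ∈ X
/-- Trace results: a finite trace paired with a result, or an infinite trace. -/
abbrev TrRes (C R : Type) := (List C × R) ⊕ Stream' C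

/-- The trace-extended rule set `Rules_tr`: finite-trace rules and
    infinite-trace rules. -/
def RulesTr {C R : Type} (Rules : Set (List (C × R) × (C × R))) :
    Set (List (C × TrRes C R) × (C × TrRes C R)) :=
  { r | (∃ (js : List (C × R)) (c : C) (res : R) (σs : List (List C)),
          (js, (c, res)) ∈ Rules ∧ σs.length = js.length ∧
          r = ((js.zip σs).map (fun p => (p.1.1, Sum.inl (p.2, p.1.2))),
               (c, Sum.inl (c :: σs.flatten, res))))
      ∨ (∃ (js : List (C × R)) (c : C) (res : R) (i : ℕ) (hi : i < js.length)
            (σs : List (List C)) (σ : Stream' C),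
          (js, (c, res)) ∈ Rules ∧ σs.length = i ∧
          r = (((js.take i).zip σs).map (fun p => (p.1.1, Sum.inl (p.2, p.1.2))) ++
                 [((js[i]'hi).1, Sum.inr σ)],
               (c, Sum.inr ((c :: σs.flatten) ++ₛ σ)))) }

/-- Equality of rules up to an index `i`: same conclusion configuration, same
    first `i` premises, same configuration in the `(i+1)`-th premise
    (`i` is 0-based here), with a prescribed result `r'` in that premise. -/
def AgreeUpTo {C R : Type} (Rules : Set (List (C × R) × (C × R)))
    (js : List (C × R)) (c : C) (i : ℕ) (hi : i < js.length) (r' : R) : Prop :=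
  ∃ (js' : List (C × R)) (res' : R) (hi' : i < js'.length),
    (js', (c, res')) ∈ Rules ∧ js'.take i = js.take i ∧
    (js'[i]'hi').1 = (js[i]'hi).1 ∧ (js'[i]'hi').2 = r'

/-- The wrong-extended rule set `Rules_wr` over results `R + {wrong}`
    (`none` stands for `wrong`): original rules, wrong-configuration axioms,
    wrong-result rules and wrong-propagation rules. -/
def RulesWr {C R : Type} (Rules : Set (List (C × R) × (C × R))) :
    Set (List (Judg C R) × Judg C R) :=
  { r | (∃ (js : List (C × R)) (c : C) (res : R),
          (js, (c, res)) ∈ Rules ∧ r = (js.map liftJ, (c, some res)))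
      ∨ (∃ (c : C), (¬ ∃ (js : List (C × R)) (res : R), (js, (c, res)) ∈ Rules) ∧
          r = ([], (c, none)))
      ∨ (∃ (js : List (C × R)) (c : C) (res : R) (i : ℕ) (hi : i < js.length) (r' : R),
          (js, (c, res)) ∈ Rules ∧ ¬ AgreeUpTo Rules js c i hi r' ∧
          r = ((js.take i).map liftJ ++ [((js[i]'hi).1, some r')], (c, none)))
      ∨ (∃ (js : List (C × R)) (c : C) (res : R) (i : ℕ) (hi : i < js.length),
          (js, (c, res)) ∈ Rules ∧
          r = ((js.take i).map liftJ ++ [((js[i]'hi).1, none)], (c, none))) }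

/-- The divergence-extended rule set `Rules_∞` over results `R + {∞}`
    (`none` stands for `∞`): original rules plus divergence-propagation
    rules. -/
def RulesInf {C R : Type} (Rules : Set (List (C × R) × (C × R))) :
    Set (List (Judg C R) × Judg C R) :=
  { r | (∃ (js : List (C × R)) (c : C) (res : R),
          (js, (c, res)) ∈ Rules ∧ r = (js.map liftJ, (c, some res)))
      ∨ (∃ (js : List (C × R)) (c : C) (res : R) (i : ℕ) (hi : i < js.length),
          (js, (c, res)) ∈ Rules ∧
          r = ((js.take i).map liftJ ++ [((js[i]'hi).1, none)], (c, none))) }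

/-- The coaxioms for divergence: `c ⇒ ∞` for every configuration `c`. -/
def CoAx (C R : Type) : Set (List (Judg C R) × Judg C R) :=
  { r | ∃ (c : C), r = ([], (c, none)) }

/-- The trace-forgetting map: `(σ, r) ↦ r` and `σ^∞ ↦ ∞`. -/
def uForget {C R : Type} : TrRes C R → Option R :=
  Sum.elim (fun p => some p.2) (fun _ => none)


/-!
Every finite-trace rule of `Rules_tr` annotates a rule of `Rules`, and the trace of each of its
premises is strictly shorter than the trace `c :: σ₁ ++ ⋯ ++ σₙ` of its conclusion. So induction on
the length of the trace unfolds any consistent set containing `c ⇒ (σ, r)` into a finite derivation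
of `c ⇒ r`, whatever infinite-trace judgements that set also contains. Conversely, a finite
derivation of `c ⇒ r` is annotated bottom-up with the concatenated traces.
-/

namespace List

theorem exists_mem_zip_of_mem_left {α β : Type*} {l₁ : List α} {l₂ : List β} {a : α}
    (hlen : l₁.length ≤ l₂.length) (ha : a ∈ l₁) : ∃ b, (a, b) ∈ l₁.zip l₂ := by
  obtain ⟨k, hk, rfl⟩ := mem_iff_getElem.mp ha
  exact ⟨l₂[k], mem_iff_getElem.mpr ⟨k, by simp; omega, by simp⟩⟩

theorem exists_forall₂_of_forall_exists {α β : Type*} {R : α → β → Prop} {l : List α}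
    (h : ∀ a ∈ l, ∃ b, R a b) : ∃ l', Forall₂ R l l' := by
  induction l with
  | nil => exact ⟨[], .nil⟩
  | cons a l ih =>
    obtain ⟨b, hb⟩ := h a mem_cons_self
    obtain ⟨l', hl'⟩ := ih fun x hx => h x (mem_cons_of_mem a hx)
    exact ⟨b :: l', .cons hb hl'⟩

theorem length_lt_length_cons_flatten {α : Type*} {L : List (List α)} {l : List α} (a : α)
    (h : l ∈ L) : l.length < (a :: L.flatten).length :=
  Nat.lt_succ_of_le (sublist_flatten_of_mem h).length_le

end List

theorem IndDerives.coDerives {J : Type} {Rules : Set (List J × J)} {j : J}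
    (h : IndDerives Rules j) : CoDerives Rules j := by
  refine ⟨{j | IndDerives Rules j}, ?_, h⟩
  rintro _ ⟨ps, _, hrule, hps⟩
  exact ⟨ps, hrule, hps⟩

section Traces

variable {C R : Type} {Rules : Set (List (C × R) × (C × R))}

theorem exists_rule_of_mem_rulesTr {ps : List (C × TrRes C R)} {c : C} {σ : List C} {r : R}
    (h : (ps, (c, Sum.inl (σ, r))) ∈ RulesTr Rules) :
    ∃ (js : List (C × R)) (σs : List (List C)), (js, (c, r)) ∈ Rules ∧
      σs.length = js.length ∧ σ = c :: σs.flatten ∧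
      ps = (js.zip σs).map fun p => (p.1.1, Sum.inl (p.2, p.1.2)) := by
  rcases h with ⟨js, _, _, σs, hrule, hlen, heq⟩ | ⟨_, _, _, _, _, _, _, _, _, heq⟩
  · simp only [Prod.mk.injEq, Sum.inl.injEq] at heq
    obtain ⟨rfl, rfl, rfl, rfl⟩ := heq
    exact ⟨js, σs, hrule, hlen, rfl, rfl⟩
  · simp at heq

theorem ConsistentL.indDerives_of_mem_rulesTr {X : Set (C × TrRes C R)}
    (hX : ConsistentL (RulesTr Rules) X) {c : C} {σ : List C} {r : R}
    (hmem : (c, Sum.inl (σ, r)) ∈ X) : IndDerives Rules (c, r) := by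
  obtain ⟨ps, hps_rule, hps⟩ := hX _ hmem
  obtain ⟨js, σs, hrule, hlen, rfl, rfl⟩ := exists_rule_of_mem_rulesTr hps_rule
  refine .node js _ hrule fun j hj => ?_
  obtain ⟨τ, hτ⟩ := List.exists_mem_zip_of_mem_left hlen.ge hj
  have hshorter : τ.length < (c :: σs.flatten).length :=
    List.length_lt_length_cons_flatten c (List.of_mem_zip hτ).2
  exact hX.indDerives_of_mem_rulesTr (hps _ (List.mem_map_of_mem hτ))
termination_by σ.length

theorem IndDerives.exists_rulesTr {j : C × R} (h : IndDerives Rules j) :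
    ∃ σ, IndDerives (RulesTr Rules) (j.1, Sum.inl (σ, j.2)) := by
  induction h with
  | node js j hrule _ ih =>
    obtain ⟨σs, hσs⟩ := List.exists_forall₂_of_forall_exists ih
    obtain ⟨hlen, hzip⟩ := List.forall₂_iff_zip.mp hσs
    refine ⟨j.1 :: σs.flatten, .node _ _ (Or.inl ⟨js, j.1, j.2, σs, hrule, hlen.symm, rfl⟩) ?_⟩
    intro _ hp
    obtain ⟨_, hmem_zip, rfl⟩ := List.mem_map.mp hp
    exact hzip hmem_zip

end Traces

theorem trace_conservative {C R : Type}
    (Rules : Set (List (C × R) × (C × R))) (c : C) (r : R) :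
    (∃ σ : List C, CoDerives (RulesTr Rules) (c, Sum.inl (σ, r))) ↔
      IndDerives Rules (c, r) :=
  ⟨fun ⟨_, _, hX, hmem⟩ => hX.indDerives_of_mem_rulesTr hmem,
    fun h => h.exists_rulesTr.imp fun _ => IndDerives.coDerives⟩
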